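/- Assume V satisfies (V₁) or (V₂) and let 0 < a < a*. For c > 0 define I_c(a) = inf{E_a(u) : u ∈ H^{1/2}(ℝ³), ‖u‖_{L²}² = c}. Then I_c(a) = c·I(ac) for all c > 0, the function c ↦ I_c(a) is concave on (0,1), and hence c ↦ I_c(a) is uniformly continuous on (0,1). -/

import Mathlib

noncomputable section

open MeasureTheory Filter Topology Real

/-- Euclidean space `ℝ³`. -/
abbrev E3 : Type := EuclideanSpace ℝ (Fin 3)

/-- The Fourier transform `û` of a function `u : ℝ³ → ℂ`. -/
def FT (u : E3 → ℂ) : E3 → ℂ := FourierTransform.fourier u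

/-- `u` belongs to `H^{1/2}(ℝ³)`:  `u ∈ L²` and `∫ √(1+|ξ|²) |û(ξ)|² dξ < ∞`. -/
def InH12 (u : E3 → ℂ) : Prop :=
  MemLp u 2 (volume : Measure E3) ∧
    Integrable (fun ξ : E3 => Real.sqrt (1 + ‖ξ‖ ^ 2) * ‖FT u ξ‖ ^ 2)

/-- The squared `H^{1/2}` norm `∫ √(1+|ξ|²) |û(ξ)|² dξ`. -/
def H12normSq (u : E3 → ℂ) : ℝ :=
  ∫ ξ : E3, Real.sqrt (1 + ‖ξ‖ ^ 2) * ‖FT u ξ‖ ^ 2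

/-- The kinetic energy `‖(-Δ+m²)^{1/4} u‖_{L²}² = ∫ √(|ξ|²+m²) |û(ξ)|² dξ`. -/
def kinetic (m : ℝ) (u : E3 → ℂ) : ℝ :=
  ∫ ξ : E3, Real.sqrt (‖ξ‖ ^ 2 + m ^ 2) * ‖FT u ξ‖ ^ 2

/-- `‖(-Δ)^{1/4} u‖_{L²}² = ∫ |ξ| |û(ξ)|² dξ`. -/
def gradHalfSq (u : E3 → ℂ) : ℝ := ∫ ξ : E3, ‖ξ‖ * ‖FT u ξ‖ ^ 2

/-- `‖(-Δ)^{-1/4} u‖_{L²}² = ∫ |ξ|⁻¹ |û(ξ)|² dξ`. -/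
def negQuarterSq (u : E3 → ℂ) : ℝ := ∫ ξ : E3, ‖ξ‖⁻¹ * ‖FT u ξ‖ ^ 2

/-- Squared `L²` mass `∫ |u|²`. -/
def massSq (u : E3 → ℂ) : ℝ := ∫ x : E3, ‖u x‖ ^ 2

/-- Potential energy `∫ V |u|²`. -/
def potentialE (V : E3 → ℝ) (u : E3 → ℂ) : ℝ := ∫ x : E3, V x * ‖u x‖ ^ 2

/-- The interaction term `∬ |u(x)|²|u(y)|² |x-y|⁻¹ dx dy`. -/
def interaction (u : E3 → ℂ) : ℝ :=
  ∫ x : E3, ∫ y : E3, ‖u x‖ ^ 2 * ‖u y‖ ^ 2 / ‖x - y‖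

/-- The pseudo-relativistic Hartree energy functional `E_a(u)`. -/
def energy (m : ℝ) (V : E3 → ℝ) (a : ℝ) (u : E3 → ℂ) : ℝ :=
  kinetic m u + potentialE V u - a / 2 * interaction u

/-- The ground-state energy `I(a)`. -/
def Ival (m : ℝ) (V : E3 → ℝ) (a : ℝ) : ℝ :=
  sInf {e : ℝ | ∃ u : E3 → ℂ, InH12 u ∧ massSq u = 1 ∧ e = energy m V a u}

/-- The variational problem with mass `c`: `I_c(a)`. -/
def IvalMass (m : ℝ) (V : E3 → ℝ) (a : ℝ) (c : ℝ) : ℝ :=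
  sInf {e : ℝ | ∃ u : E3 → ℂ, InH12 u ∧ massSq u = c ∧ e = energy m V a u}

/-- `u` is a minimizer for `I(a)`. -/
def IsMinimizer (m : ℝ) (V : E3 → ℝ) (a : ℝ) (u : E3 → ℂ) : Prop :=
  InH12 u ∧ massSq u = 1 ∧ energy m V a u = Ival m V a

/-- The Chandrasekhar limit `a*`: the largest constant such that
`‖(-Δ)^{1/4}u‖² ‖u‖² ≥ (a/2) ∬ |u(x)|²|u(y)|²|x-y|⁻¹`. -/
def aStar : ℝ :=
  sSup {a : ℝ | ∀ u : E3 → ℂ, InH12 u →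
    a / 2 * interaction u ≤ gradHalfSq u * massSq u}

/-- The operator `√(-Δ)` acting via the Fourier transform. -/
def sqrtLap (u : E3 → ℂ) : E3 → ℂ :=
  FourierTransformInv.fourierInv (fun ξ : E3 => (‖ξ‖ : ℂ) * FT u ξ)

/-- The set `𝒢` of positive, radially symmetric, decreasing optimizers `Q`. -/
def Gset : Set (E3 → ℂ) :=
  {Q | InH12 Q ∧
    (∀ x : E3, (Q x).im = 0 ∧ 0 < (Q x).re) ∧
    (∀ x y : E3, ‖x‖ = ‖y‖ → Q x = Q y) ∧
    (∀ x y : E3, ‖x‖ ≤ ‖y‖ → (Q y).re ≤ (Q x).re) ∧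
    massSq Q = 1 ∧ gradHalfSq Q = 1 ∧ aStar / 2 * interaction Q = 1 ∧
    (∀ x : E3,
      sqrtLap Q x + Q x
        - (aStar : ℂ) * ((∫ y : E3, ‖Q y‖ ^ 2 / ‖x - y‖ : ℝ) : ℂ) * Q x = 0)}

/-- Condition (V₁): `0 ≤ V ∈ L^∞_loc` is trapping. -/
def V1cond (V : E3 → ℝ) : Prop :=
  Measurable V ∧ (∀ x, 0 ≤ V x) ∧
    (∀ R : ℝ, ∃ C : ℝ, ∀ x : E3, ‖x‖ ≤ R → V x ≤ C) ∧
    Tendsto V (Filter.cocompact E3) atTop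

/-- Condition (V₂): `0 ≤ V` is continuous and `ℤ³`-periodic. -/
def V2cond (V : E3 → ℝ) : Prop :=
  Continuous V ∧ (∀ x, 0 ≤ V x) ∧
    ∀ (x : E3) (z : Fin 3 → ℤ), V (WithLp.toLp 2 (fun i => x i + (z i : ℝ))) = V x

/-!
Writing `u = √c • v` with `‖v‖₂ = 1` turns the mass-`c` problem into one on the unit sphere:
`E_a(√c v) = c (K v + P v) - c² (a/2) J v = c E_{ac}(v)`, with `K`, `P`, `J` the kinetic,
potential and interaction terms. This gives `I_c(a) = c I(ac)` and exhibits `c ↦ I_c(a)` as an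
infimum of concave quadratics in `c`. Since `a < a*`, `(a/2) J v ≤ θ (K v + P v)` for some
`θ < 1`, so on `[0, 1]` each quadratic is at least `c (1 - θ) (K v + P v) ≥ 0`. Hence only the `v`
with `K v + P v` below a fixed bound `R` matter for the infimum, and their quadratics are all
`R`-Lipschitz on `[0, 1]`. An infimum of concave (resp. `R`-Lipschitz) functions that is bounded
below is again concave (resp. `R`-Lipschitz).
-/

open Set
open scoped NNReal Pointwise

theorem ConcaveOn.ciInf {ι E : Type*} [AddCommGroup E] [Module ℝ E] {s : Set E}
    {f : ι → E → ℝ} (hs : Convex ℝ s) (hf : ∀ i, ConcaveOn ℝ s (f i))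
    (hbdd : ∀ x ∈ s, BddBelow (range fun i => f i x)) :
    ConcaveOn ℝ s fun x => ⨅ i, f i x := by
  refine ⟨hs, fun x hx y hy a b ha hb hab => ?_⟩
  cases isEmpty_or_nonempty ι
  · simp
  · refine le_ciInf fun i => ?_
    calc a • (⨅ i, f i x) + b • ⨅ i, f i y ≤ a • f i x + b • f i y := by
          gcongr
          exacts [ciInf_le (hbdd x hx) i, ciInf_le (hbdd y hy) i]
      _ ≤ f i (a • x + b • y) := (hf i).2 hx hy ha hb hab

theorem LipschitzOnWith.ciInf {ι α : Type*} [PseudoMetricSpace α] {K : ℝ≥0} {s : Set α}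
    {f : ι → α → ℝ} (hf : ∀ i, LipschitzOnWith K (f i) s)
    (hbdd : ∀ x ∈ s, BddBelow (range fun i => f i x)) :
    LipschitzOnWith K (fun x => ⨅ i, f i x) s := by
  refine LipschitzOnWith.of_le_add_mul K fun x hx y hy => ?_
  cases isEmpty_or_nonempty ι
  · simp only [Real.iInf_of_isEmpty, zero_add]
    positivity
  · rw [← sub_le_iff_le_add]
    refine le_ciInf fun i => sub_le_iff_le_add.2 ?_
    calc ⨅ i, f i x ≤ f i x := ciInf_le (hbdd x hx) i
      _ ≤ f i y + K * dist x y := (hf i).le_add_mul hx hy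

theorem concaveOn_mul_sub_sq_mul (A : ℝ) {B : ℝ} (hB : 0 ≤ B) :
    ConcaveOn ℝ univ fun c : ℝ => c * A - c ^ 2 * B := by
  refine ⟨convex_univ, fun x _ y _ s t hs ht hst => ?_⟩
  obtain rfl : t = 1 - s := by linarith
  simp only [smul_eq_mul]
  nlinarith [mul_nonneg hB (mul_nonneg (mul_nonneg hs ht) (sq_nonneg (x - y)))]

theorem lipschitzOnWith_mul_sub_sq_mul {A B : ℝ} {R : ℝ≥0} (hB : 0 ≤ B) (hBA : B ≤ A)
    (hAR : A ≤ R) : LipschitzOnWith R (fun c : ℝ => c * A - c ^ 2 * B) (Icc 0 1) := by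
  refine LipschitzOnWith.of_dist_le_mul fun x hx y hy => ?_
  have hslope : |A - (x + y) * B| ≤ R := by
    rw [abs_le]
    constructor <;> nlinarith [hx.1, hx.2, hy.1, hy.2]
  rw [Real.dist_eq, Real.dist_eq, show x * A - x ^ 2 * B - (y * A - y ^ 2 * B)
    = (A - (x + y) * B) * (x - y) by ring, abs_mul]
  gcongr

theorem mul_sub_le_mul_sub_sq_mul {A B c : ℝ} (hB : 0 ≤ B) (hc : c ∈ Icc (0 : ℝ) 1) :
    c * (A - B) ≤ c * A - c ^ 2 * B := by
  nlinarith [mul_nonneg (mul_nonneg hc.1 (sub_nonneg.2 hc.2)) hB]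

def quadraticEnergy (m : ℝ) (V : E3 → ℝ) (u : E3 → ℂ) : ℝ := kinetic m u + potentialE V u

def massShell (c : ℝ) : Set (E3 → ℂ) := {u | InH12 u ∧ massSq u = c}

-- `E_a(√c • v)` by `energy_ofReal_smul`: for `‖v‖₂ = 1`, the energy at mass `c`.
def scaledEnergy (m : ℝ) (V : E3 → ℝ) (a : ℝ) (v : E3 → ℂ) (c : ℝ) : ℝ :=
  c * quadraticEnergy m V v - c ^ 2 * (a / 2 * interaction v)

def lowEnergyShell (m : ℝ) (V : E3 → ℝ) (R : ℝ≥0) : Set (E3 → ℂ) :=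
  {v | v ∈ massShell 1 ∧ quadraticEnergy m V v ≤ R}

lemma interaction_nonneg (u : E3 → ℂ) : 0 ≤ interaction u :=
  integral_nonneg fun _ => integral_nonneg fun _ => by positivity

lemma potentialE_nonneg {V : E3 → ℝ} (hV0 : ∀ x, 0 ≤ V x) (u : E3 → ℂ) : 0 ≤ potentialE V u :=
  integral_nonneg fun x => mul_nonneg (hV0 x) (by positivity)

lemma quadraticEnergy_nonneg (m : ℝ) {V : E3 → ℝ} (hV0 : ∀ x, 0 ≤ V x) (u : E3 → ℂ) :
    0 ≤ quadraticEnergy m V u :=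
  add_nonneg (integral_nonneg fun _ => by positivity) (potentialE_nonneg hV0 u)

lemma FT_smul (r : ℂ) (u : E3 → ℂ) : FT (r • u) = r • FT u :=
  VectorFourier.fourierIntegral_const_smul _ _ _ u r

lemma norm_ofReal_smul_apply_sq {α : Type*} (r : ℝ) (f : α → ℂ) (x : α) :
    ‖((r : ℂ) • f) x‖ ^ 2 = r ^ 2 * ‖f x‖ ^ 2 := by
  simp [mul_pow]

lemma integral_mul_norm_FT_ofReal_smul_sq (w : E3 → ℝ) (r : ℝ) (u : E3 → ℂ) :
    ∫ ξ, w ξ * ‖FT ((r : ℂ) • u) ξ‖ ^ 2 = r ^ 2 * ∫ ξ, w ξ * ‖FT u ξ‖ ^ 2 := by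
  simp_rw [FT_smul, norm_ofReal_smul_apply_sq, mul_left_comm (w _), integral_const_mul]

lemma massSq_ofReal_smul (r : ℝ) (u : E3 → ℂ) : massSq ((r : ℂ) • u) = r ^ 2 * massSq u := by
  simp_rw [massSq, norm_ofReal_smul_apply_sq, integral_const_mul]

lemma kinetic_ofReal_smul (m r : ℝ) (u : E3 → ℂ) :
    kinetic m ((r : ℂ) • u) = r ^ 2 * kinetic m u :=
  integral_mul_norm_FT_ofReal_smul_sq _ r u

lemma potentialE_ofReal_smul (V : E3 → ℝ) (r : ℝ) (u : E3 → ℂ) :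
    potentialE V ((r : ℂ) • u) = r ^ 2 * potentialE V u := by
  simp_rw [potentialE, norm_ofReal_smul_apply_sq, mul_left_comm (V _), integral_const_mul]

lemma interaction_ofReal_smul (r : ℝ) (u : E3 → ℂ) :
    interaction ((r : ℂ) • u) = r ^ 4 * interaction u := by
  simp_rw [interaction, norm_ofReal_smul_apply_sq, ← integral_const_mul]
  congr 1 with x
  congr 1 with y
  ring

lemma InH12.ofReal_smul {u : E3 → ℂ} (hu : InH12 u) (r : ℝ) : InH12 ((r : ℂ) • u) := by
  refine ⟨hu.1.const_smul _, ?_⟩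
  simp_rw [FT_smul, norm_ofReal_smul_apply_sq, mul_left_comm (√_)]
  exact hu.2.const_mul _

section Scaling

variable (m : ℝ) (V : E3 → ℝ) (a : ℝ)

lemma energy_ofReal_smul (r : ℝ) (u : E3 → ℂ) :
    energy m V a ((r : ℂ) • u) =
      r ^ 2 * quadraticEnergy m V u - r ^ 4 * (a / 2 * interaction u) := by
  rw [energy, kinetic_ofReal_smul, potentialE_ofReal_smul, interaction_ofReal_smul,
    quadraticEnergy]
  ring

lemma IvalMass_eq_sInf_image (c : ℝ) : IvalMass m V a c = sInf (energy m V a '' massShell c) := by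
  simp only [IvalMass, massShell, image, mem_ofPred_eq, eq_comm, and_assoc]

lemma massShell_eq_image {c : ℝ} (hc : 0 < c) :
    massShell c = (fun v => ((√c : ℝ) : ℂ) • v) '' massShell 1 := by
  have hsq : √c ^ 2 = c := Real.sq_sqrt hc.le
  ext u
  constructor
  · rintro ⟨hu, huc⟩
    refine ⟨(((√c)⁻¹ : ℝ) : ℂ) • u, ⟨hu.ofReal_smul _, ?_⟩, ?_⟩
    · rw [massSq_ofReal_smul, huc, inv_pow, hsq, inv_mul_cancel₀ hc.ne']
    · dsimp only
      rw [smul_smul, ← Complex.ofReal_mul, mul_inv_cancel₀ (Real.sqrt_pos.2 hc).ne',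
        Complex.ofReal_one, one_smul]
  · rintro ⟨v, ⟨hv, hv1⟩, rfl⟩
    exact ⟨hv.ofReal_smul _, by rw [massSq_ofReal_smul, hv1, hsq, mul_one]⟩

lemma energy_image_massShell {c : ℝ} (hc : 0 < c) :
    energy m V a '' massShell c = (scaledEnergy m V a · c) '' massShell 1 := by
  have h4 : √c ^ 4 = c ^ 2 := by rw [show 4 = 2 * 2 from rfl, pow_mul, Real.sq_sqrt hc.le]
  rw [massShell_eq_image hc, image_image]
  simp only [energy_ofReal_smul, Real.sq_sqrt hc.le, h4, scaledEnergy]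

theorem IvalMass_eq_mul_Ival {c : ℝ} (hc : 0 < c) : IvalMass m V a c = c * Ival m V (a * c) := by
  have himage : energy m V a '' massShell c = c • (energy m V (a * c) '' massShell 1) := by
    rw [energy_image_massShell m V a hc, ← image_smul, image_image]
    congr with v
    simp only [scaledEnergy, energy, quadraticEnergy, smul_eq_mul]
    ring
  rw [IvalMass_eq_sInf_image, himage, Real.sInf_smul_of_nonneg hc.le, smul_eq_mul,
    ← IvalMass_eq_sInf_image]
  rfl

end Scaling

lemma InH12.integrable_mul_norm_FT_sq {u : E3 → ℂ} (hu : InH12 u) {w : E3 → ℝ} {C : ℝ}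
    (hw : Continuous w) (hwC : ∀ ξ, |w ξ| ≤ C * √(1 + ‖ξ‖ ^ 2)) :
    Integrable fun ξ => w ξ * ‖FT u ξ‖ ^ 2 := by
  have hpos : ∀ ξ : E3, 0 < √(1 + ‖ξ‖ ^ 2) := fun ξ => by positivity
  have hratio : Continuous fun ξ : E3 => w ξ / √(1 + ‖ξ‖ ^ 2) :=
    hw.div (by fun_prop) fun ξ => (hpos ξ).ne'
  refine (hu.2.bdd_mul hratio.aestronglyMeasurable (c := C) (ae_of_all _ fun ξ => ?_)).congr
    (ae_of_all _ fun ξ => ?_)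
  · rw [Real.norm_eq_abs, abs_div, abs_of_pos (hpos ξ), div_le_iff₀ (hpos ξ)]
    exact hwC ξ
  · field_simp [(hpos ξ).ne']

lemma gradHalfSq_le_kinetic (m : ℝ) {u : E3 → ℂ} (hu : InH12 u) : gradHalfSq u ≤ kinetic m u := by
  have hweight : ∀ ξ : E3, |√(‖ξ‖ ^ 2 + m ^ 2)| ≤ √(1 + m ^ 2) * √(1 + ‖ξ‖ ^ 2) := fun ξ => by
    rw [abs_of_nonneg (Real.sqrt_nonneg _), ← Real.sqrt_mul (by positivity)]
    exact Real.sqrt_le_sqrt (by nlinarith [sq_nonneg ‖ξ‖, sq_nonneg m, sq_nonneg (‖ξ‖ * m)])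
  refine integral_mono_of_nonneg (ae_of_all _ fun ξ => by positivity)
    (hu.integrable_mul_norm_FT_sq (by fun_prop) hweight) (ae_of_all _ fun ξ => ?_)
  exact mul_le_mul_of_nonneg_right (Real.le_sqrt_of_sq_le (by nlinarith [sq_nonneg m]))
    (by positivity)

lemma exists_lt_forall_interaction_le {a : ℝ} (ha : a < aStar) :
    ∃ b, a < b ∧ ∀ u, InH12 u → b / 2 * interaction u ≤ gradHalfSq u * massSq u := by
  set S := {b : ℝ | ∀ u, InH12 u → b / 2 * interaction u ≤ gradHalfSq u * massSq u}
  by_cases hS : BddAbove S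
  · have hzero : (0 : ℝ) ∈ S := fun u _ => by
      rw [zero_div, zero_mul]
      exact mul_nonneg (integral_nonneg fun ξ => by positivity)
        (integral_nonneg fun x => by positivity)
    obtain ⟨b, hb, hab⟩ := exists_lt_of_lt_csSup ⟨0, hzero⟩ ha
    exact ⟨b, hab, hb⟩
  · obtain ⟨b, hb, hab⟩ := not_bddAbove_iff.1 hS a
    exact ⟨b, hab, hb⟩

lemma exists_interaction_le_quadraticEnergy (m : ℝ) {V : E3 → ℝ} (hV0 : ∀ x, 0 ≤ V x)
    {a : ℝ} (ha0 : 0 ≤ a) (ha : a < aStar) :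
    ∃ θ, 0 ≤ θ ∧ θ < 1 ∧
      ∀ v ∈ massShell 1, a / 2 * interaction v ≤ θ * quadraticEnergy m V v := by
  obtain ⟨b, hab, hb⟩ := exists_lt_forall_interaction_le ha
  have hb0 : 0 < b := ha0.trans_lt hab
  refine ⟨a / b, by positivity, (div_lt_one hb0).2 hab, fun v ⟨hv, hv1⟩ => ?_⟩
  have hbJ : b / 2 * interaction v ≤ quadraticEnergy m V v :=
    calc b / 2 * interaction v ≤ gradHalfSq v * massSq v := hb v hv
      _ = gradHalfSq v := by rw [hv1, mul_one]
      _ ≤ kinetic m v := gradHalfSq_le_kinetic m hv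
      _ ≤ quadraticEnergy m V v := le_add_of_nonneg_right (potentialE_nonneg hV0 v)
  calc a / 2 * interaction v = a / b * (b / 2 * interaction v) := by field_simp
    _ ≤ a / b * quadraticEnergy m V v := by gcongr

lemma concaveOn_scaledEnergy (m : ℝ) (V : E3 → ℝ) {a : ℝ} (ha0 : 0 ≤ a) (v : E3 → ℂ) :
    ConcaveOn ℝ univ (scaledEnergy m V a v) :=
  concaveOn_mul_sub_sq_mul _ (mul_nonneg (by positivity) (interaction_nonneg v))

lemma scaledEnergy_le_mul_quadraticEnergy (m : ℝ) (V : E3 → ℝ) {a : ℝ} (ha0 : 0 ≤ a)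
    (v : E3 → ℂ) (c : ℝ) :
    scaledEnergy m V a v c ≤ c * quadraticEnergy m V v := by
  have := mul_nonneg (mul_nonneg (sq_nonneg c) (by positivity : 0 ≤ a / 2))
    (interaction_nonneg v)
  rw [scaledEnergy]
  linarith

section ScaledEnergyOnMassShell

variable {m : ℝ} {V : E3 → ℝ} {a θ : ℝ} {v : E3 → ℂ} {c : ℝ}

lemma mul_quadraticEnergy_le_scaledEnergy (ha0 : 0 ≤ a)
    (hJ : ∀ v ∈ massShell 1, a / 2 * interaction v ≤ θ * quadraticEnergy m V v)
    (hv : v ∈ massShell 1) (hc : c ∈ Icc (0 : ℝ) 1) :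
    c * ((1 - θ) * quadraticEnergy m V v) ≤ scaledEnergy m V a v c := by
  calc c * ((1 - θ) * quadraticEnergy m V v)
      ≤ c * (quadraticEnergy m V v - a / 2 * interaction v) := by
        gcongr
        · exact hc.1
        · linarith [hJ v hv]
    _ ≤ scaledEnergy m V a v c :=
      mul_sub_le_mul_sub_sq_mul (mul_nonneg (by positivity) (interaction_nonneg v)) hc

lemma bddBelow_range_scaledEnergy (hV0 : ∀ x, 0 ≤ V x) (ha0 : 0 ≤ a) (hθ : θ < 1)
    (hJ : ∀ v ∈ massShell 1, a / 2 * interaction v ≤ θ * quadraticEnergy m V v)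
    {T : Set (E3 → ℂ)} (hT : T ⊆ massShell 1) (hc : c ∈ Icc (0 : ℝ) 1) :
    BddBelow (range fun v : T => scaledEnergy m V a v c) := by
  refine ⟨0, ?_⟩
  rintro _ ⟨v, rfl⟩
  refine le_trans ?_ (mul_quadraticEnergy_le_scaledEnergy ha0 hJ (hT v.2) hc)
  have := quadraticEnergy_nonneg m hV0 v
  have := hc.1
  have : 0 ≤ 1 - θ := by linarith
  positivity

lemma lipschitzOnWith_scaledEnergy (hV0 : ∀ x, 0 ≤ V x) (ha0 : 0 ≤ a) (hθ : θ < 1)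
    (hJ : ∀ v ∈ massShell 1, a / 2 * interaction v ≤ θ * quadraticEnergy m V v)
    {R : ℝ≥0} (hv : v ∈ lowEnergyShell m V R) :
    LipschitzOnWith R (scaledEnergy m V a v) (Icc 0 1) := by
  have hQ := quadraticEnergy_nonneg m hV0 v
  refine lipschitzOnWith_mul_sub_sq_mul (mul_nonneg (by positivity) (interaction_nonneg v)) ?_ hv.2
  nlinarith [hJ v hv.1]

lemma scaledEnergy_le_scaledEnergy (ha0 : 0 ≤ a)
    (hJ : ∀ v ∈ massShell 1, a / 2 * interaction v ≤ θ * quadraticEnergy m V v)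
    {w : E3 → ℂ} (hv : v ∈ massShell 1)
    (hwv : quadraticEnergy m V w ≤ (1 - θ) * quadraticEnergy m V v)
    (hc : c ∈ Icc (0 : ℝ) 1) :
    scaledEnergy m V a w c ≤ scaledEnergy m V a v c :=
  calc scaledEnergy m V a w c ≤ c * quadraticEnergy m V w :=
        scaledEnergy_le_mul_quadraticEnergy m V ha0 w c
    _ ≤ c * ((1 - θ) * quadraticEnergy m V v) := mul_le_mul_of_nonneg_left hwv hc.1
    _ ≤ scaledEnergy m V a v c := mul_quadraticEnergy_le_scaledEnergy ha0 hJ hv hc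

theorem IvalMass_eqOn_iInf_lowEnergyShell (hV0 : ∀ x, 0 ≤ V x) (ha0 : 0 ≤ a) (hθ0 : 0 ≤ θ)
    (hθ : θ < 1)
    (hJ : ∀ v ∈ massShell 1, a / 2 * interaction v ≤ θ * quadraticEnergy m V v) :
    ∃ R : ℝ≥0, EqOn (IvalMass m V a)
      (fun c => ⨅ v : lowEnergyShell m V R, scaledEnergy m V a v c) (Ioc 0 1) := by
  rcases (massShell 1).eq_empty_or_nonempty with hempty | ⟨v₀, hv₀⟩
  · refine ⟨0, fun c hc => ?_⟩
    beta_reduce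
    have : IsEmpty (lowEnergyShell m V 0) := ⟨fun v => hempty.subset v.2.1⟩
    rw [IvalMass_eq_sInf_image, energy_image_massShell m V a hc.1, hempty, image_empty,
      Real.sInf_empty, Real.iInf_of_isEmpty]
  have hQ₀ := quadraticEnergy_nonneg m hV0 v₀
  have hθ1 : 0 < 1 - θ := by linarith
  let R : ℝ≥0 := ⟨quadraticEnergy m V v₀ / (1 - θ), by positivity⟩
  have hv₀R : v₀ ∈ lowEnergyShell m V R :=
    ⟨hv₀, (le_div_iff₀ hθ1).2 (by nlinarith)⟩
  have : Nonempty (lowEnergyShell m V R) := ⟨⟨v₀, hv₀R⟩⟩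
  refine ⟨R, fun c hc => ?_⟩
  beta_reduce
  have hc' : c ∈ Icc (0 : ℝ) 1 := Ioc_subset_Icc_self hc
  have hbddR := bddBelow_range_scaledEnergy hV0 ha0 hθ hJ
    (T := lowEnergyShell m V R) (fun v hv => hv.1) hc'
  have hbdd : BddBelow ((scaledEnergy m V a · c) '' massShell 1) := by
    simpa only [image_eq_range] using bddBelow_range_scaledEnergy hV0 ha0 hθ hJ subset_rfl hc'
  rw [IvalMass_eq_sInf_image, energy_image_massShell m V a hc.1]
  refine le_antisymm (le_ciInf fun v => csInf_le hbdd (mem_image_of_mem _ v.2.1)) ?_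
  refine le_csInf (Set.Nonempty.image _ ⟨v₀, hv₀⟩) ?_
  rintro _ ⟨v, hv, rfl⟩
  by_cases hvR : quadraticEnergy m V v ≤ R
  · exact ciInf_le hbddR ⟨v, hv, hvR⟩
  -- a `v` outside the truncation is beaten by `v₀`
  have hv₀v : quadraticEnergy m V v₀ ≤ (1 - θ) * quadraticEnergy m V v := by
    linarith [(div_lt_iff₀ hθ1).1 (not_le.1 hvR)]
  exact (ciInf_le hbddR ⟨v₀, hv₀R⟩).trans (scaledEnergy_le_scaledEnergy ha0 hJ hv hv₀v hc')

end ScaledEnergyOnMassShell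

theorem stmt13_general (m : ℝ) (V : E3 → ℝ) (hV : V1cond V ∨ V2cond V)
    (a : ℝ) (ha0 : 0 < a) (ha : a < aStar) :
    (∀ c : ℝ, 0 < c → IvalMass m V a c = c * Ival m V (a * c)) ∧
      ConcaveOn ℝ (Set.Ioo (0 : ℝ) 1) (IvalMass m V a) ∧
      UniformContinuousOn (IvalMass m V a) (Set.Ioo (0 : ℝ) 1) := by
  have hV0 : ∀ x, 0 ≤ V x := hV.elim (fun h => h.2.1) (fun h => h.2.1)
  obtain ⟨θ, hθ0, hθ, hJ⟩ := exists_interaction_le_quadraticEnergy m hV0 ha0.le ha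
  obtain ⟨R, hR⟩ := IvalMass_eqOn_iInf_lowEnergyShell hV0 ha0.le hθ0 hθ hJ
  have hEq := (hR.mono Ioo_subset_Ioc_self).symm
  have hbdd : ∀ c ∈ Ioo (0 : ℝ) 1,
      BddBelow (range fun v : lowEnergyShell m V R => scaledEnergy m V a v c) :=
    fun c hc => bddBelow_range_scaledEnergy hV0 ha0.le hθ hJ (fun v hv => hv.1)
      (Ioo_subset_Icc_self hc)
  refine ⟨fun c hc => IvalMass_eq_mul_Ival m V a hc, ?_, ?_⟩
  · refine (ConcaveOn.ciInf (convex_Ioo 0 1) (fun v => ?_) hbdd).congr hEq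
    exact (concaveOn_scaledEnergy m V ha0.le v).subset (subset_univ _) (convex_Ioo 0 1)
  · refine (LipschitzOnWith.ciInf (K := R) (fun v => ?_) hbdd).uniformContinuousOn.congr hEq
    exact (lipschitzOnWith_scaledEnergy hV0 ha0.le hθ hJ v.2).mono Ioo_subset_Icc_self

/-- Scaling identity `I_c(a) = c·I(ac)`, concavity and uniform continuity
of `c ↦ I_c(a)` on `(0,1)`. -/
theorem stmt13 (m : ℝ) (hm : 0 < m) (V : E3 → ℝ) (hV : V1cond V ∨ V2cond V)
    (a : ℝ) (ha0 : 0 < a) (ha : a < aStar) :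
    (∀ c : ℝ, 0 < c → IvalMass m V a c = c * Ival m V (a * c)) ∧
      ConcaveOn ℝ (Set.Ioo (0 : ℝ) 1) (IvalMass m V a) ∧
      UniformContinuousOn (IvalMass m V a) (Set.Ioo (0 : ℝ) 1) :=
  stmt13_general m V hV a ha0 ha
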